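/- Let q > 1 be real, D = diag(q, −q⁻¹), and U = ((1/[2]_q, √[3]_q/[2]_q), (−√[3]_q/[2]_q, 1/[2]_q)). Then the two matrix products representing the two 3-strand braid realizations (2,3,1,4) and (1,−1,1,3,1,1,1,1,1,1) of the knot 10₁₃₉ have the same trace: trace( D²·(U·D³·Uᵀ)·D·(U·D⁴·Uᵀ) ) = trace( D·(U·D⁻¹·Uᵀ)·D·(U·D³·Uᵀ)·(D·(U·D·Uᵀ))³ ) = −(q⁵ + q⁻⁵)/(q + q⁻¹). -/

import Mathlib

/-!
In the basis where `D = diag(q, −q⁻¹)`, `U` is a rotation with `cos² = 1/[2]²` and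
`sin² = [3]/[2]²`, orthogonal because `[2]² = [3] + 1`. Hence `A = D·(U D Uᵀ)` has determinant
`1` and trace `(q² + q⁻² − 2[3])/[2]² = −1`, so Cayley–Hamilton gives `A² + A + 1 = 0` and
`A³ = 1`: the full twist `(σ₁σ₂)³` acts trivially on this sector. It strips the tail `A³` from
the second braid word, and both remaining four-letter words have traces given by one closed
formula in `qᵃ`, `(−q⁻¹)ᵃ`, `[2]` and `[3]`, which evaluates to `−(q⁵ + q⁻⁵)/(q + q⁻¹)`.
-/

open Matrix

/-- The quantum integer `[n]_q = (qⁿ − q⁻ⁿ)/(q − q⁻¹)`. -/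
noncomputable def qn (q : ℝ) (n : ℤ) : ℝ := (q ^ n - q ^ (-n)) / (q - q⁻¹)

/-- Integer powers of the diagonal R-matrix: `Dᵃ = diag(qᵃ, (−q⁻¹)ᵃ)`. -/
noncomputable def Dpow (q : ℝ) (a : ℤ) : Matrix (Fin 2) (Fin 2) ℝ :=
  !![q ^ a, 0; 0, (-q⁻¹) ^ a]

/-- The mixing (Racah) matrix `U`. -/
noncomputable def Umat (q : ℝ) : Matrix (Fin 2) (Fin 2) ℝ :=
  !![1 / qn q 2, Real.sqrt (qn q 3) / qn q 2;
     -Real.sqrt (qn q 3) / qn q 2, 1 / qn q 2]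

theorem Matrix.pow_three_eq_one_of_trace_eq_neg_one_of_det_eq_one {R : Type*} [CommRing R]
    {M : Matrix (Fin 2) (Fin 2) R} (htr : M.trace = -1) (hdet : M.det = 1) : M ^ 3 = 1 := by
  nontriviality R
  have hCH : M ^ 2 + M + 1 = 0 := by
    simpa [charpoly_fin_two, htr, hdet, Algebra.algebraMap_eq_smul_one] using
      M.aeval_self_charpoly
  calc M ^ 3 = (M - 1) * (M ^ 2 + M + 1) + 1 := by noncomm_ring
    _ = 1 := by rw [hCH, mul_zero, zero_add]

section Rotation
variable {R : Type*} [CommRing R] (c s : R)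

theorem rot_mul_diag_mul_rot_transpose (x₁ x₂ : R) :
    !![c, s; -s, c] * !![x₁, 0; 0, x₂] * !![c, s; -s, c]ᵀ =
      !![c ^ 2 * x₁ + s ^ 2 * x₂, c * s * (x₂ - x₁);
         c * s * (x₂ - x₁), s ^ 2 * x₁ + c ^ 2 * x₂] := by
  have hT : !![c, s; -s, c]ᵀ = !![c, -s; s, c] := by
    ext i j; fin_cases i <;> fin_cases j <;> rfl
  rw [hT, mul_fin_two, mul_fin_two]
  ring_nf

theorem trace_diag_mul_rot_conj (a₁ a₂ x₁ x₂ : R) :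
    (!![a₁, 0; 0, a₂] * (!![c, s; -s, c] * !![x₁, 0; 0, x₂] * !![c, s; -s, c]ᵀ)).trace =
      a₁ * (c ^ 2 * x₁ + s ^ 2 * x₂) + a₂ * (s ^ 2 * x₁ + c ^ 2 * x₂) := by
  rw [rot_mul_diag_mul_rot_transpose]; simp only [mul_fin_two, trace_fin_two_of]; ring

theorem det_diag_mul_rot_conj (a₁ a₂ x₁ x₂ : R) :
    (!![a₁, 0; 0, a₂] * (!![c, s; -s, c] * !![x₁, 0; 0, x₂] * !![c, s; -s, c]ᵀ)).det =
      a₁ * a₂ * (x₁ * x₂) * (c ^ 2 + s ^ 2) ^ 2 := by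
  rw [rot_mul_diag_mul_rot_transpose]; simp only [mul_fin_two, det_fin_two_of]; ring

theorem trace_diag_mul_rot_conj_mul_diag_mul_rot_conj (a₁ a₂ x₁ x₂ b₁ b₂ y₁ y₂ : R) :
    (!![a₁, 0; 0, a₂] * (!![c, s; -s, c] * !![x₁, 0; 0, x₂] * !![c, s; -s, c]ᵀ) *
        !![b₁, 0; 0, b₂] * (!![c, s; -s, c] * !![y₁, 0; 0, y₂] * !![c, s; -s, c]ᵀ)).trace =
      a₁ * b₁ * (c ^ 2 * x₁ + s ^ 2 * x₂) * (c ^ 2 * y₁ + s ^ 2 * y₂) +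
      (a₁ * b₂ + a₂ * b₁) * (c ^ 2 * s ^ 2) * (x₂ - x₁) * (y₂ - y₁) +
      a₂ * b₂ * (s ^ 2 * x₁ + c ^ 2 * x₂) * (s ^ 2 * y₁ + c ^ 2 * y₂) := by
  rw [rot_mul_diag_mul_rot_transpose, rot_mul_diag_mul_rot_transpose]
  simp only [mul_fin_two, trace_fin_two_of]
  ring

end Rotation

theorem ne_zero_of_sub_inv_ne_zero {K : Type*} [DivisionRing K] {a : K} (ha : a - a⁻¹ ≠ 0) :
    a ≠ 0 := by
  rintro rfl
  simp at ha

section QuantumIntegers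
variable {q : ℝ}

theorem qn_two (hq : q - q⁻¹ ≠ 0) : qn q 2 = q + q⁻¹ := by
  rw [qn, div_eq_iff hq]; simp only [_root_.zpow_neg, zpow_ofNat]; ring

theorem qn_three (hq : q - q⁻¹ ≠ 0) : qn q 3 = q ^ 2 + 1 + q⁻¹ ^ 2 := by
  have hq0 := ne_zero_of_sub_inv_ne_zero hq
  rw [qn, div_eq_iff hq]; simp only [_root_.zpow_neg, zpow_ofNat]; field_simp; ring

theorem qn_three_pos (hq : q - q⁻¹ ≠ 0) : 0 < qn q 3 := by
  rw [qn_three hq]; positivity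

theorem qn_two_sq (hq : q - q⁻¹ ≠ 0) : qn q 2 ^ 2 = qn q 3 + 1 := by
  have hq0 := ne_zero_of_sub_inv_ne_zero hq
  rw [qn_two hq, qn_three hq]; field_simp; ring

theorem qn_two_ne_zero (hq : q - q⁻¹ ≠ 0) : qn q 2 ≠ 0 := by
  apply pow_ne_zero_iff two_ne_zero |>.mp
  rw [qn_two_sq hq]; linarith [qn_three_pos hq]

end QuantumIntegers

section Braid
variable {q : ℝ}

theorem Umat_eq_rot :
    Umat q = !![1 / qn q 2, √(qn q 3) / qn q 2; -(√(qn q 3) / qn q 2), 1 / qn q 2] := by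
  rw [Umat, neg_div]

theorem Umat_cos_sq_add_sin_sq (hq : q - q⁻¹ ≠ 0) :
    (1 / qn q 2) ^ 2 + (√(qn q 3) / qn q 2) ^ 2 = 1 := by
  rw [div_pow, div_pow, Real.sq_sqrt (qn_three_pos hq).le, one_pow, ← add_div, add_comm 1,
    ← qn_two_sq hq, div_self (pow_ne_zero 2 (qn_two_ne_zero hq))]

theorem trace_Dpow_mul_Umat_conj_mul_Dpow_mul_Umat_conj (hq : q - q⁻¹ ≠ 0) (a b c d : ℤ) :
    (Dpow q a * (Umat q * Dpow q b * (Umat q)ᵀ) * Dpow q c *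
        (Umat q * Dpow q d * (Umat q)ᵀ)).trace =
      (q ^ a * q ^ c * (q ^ b + qn q 3 * (-q⁻¹) ^ b) * (q ^ d + qn q 3 * (-q⁻¹) ^ d) +
        (q ^ a * (-q⁻¹) ^ c + (-q⁻¹) ^ a * q ^ c) * qn q 3 *
          ((-q⁻¹) ^ b - q ^ b) * ((-q⁻¹) ^ d - q ^ d) +
        (-q⁻¹) ^ a * (-q⁻¹) ^ c *
          (qn q 3 * q ^ b + (-q⁻¹) ^ b) * (qn q 3 * q ^ d + (-q⁻¹) ^ d)) /
        qn q 2 ^ 4 := by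
  have h2 := qn_two_ne_zero hq
  rw [Umat_eq_rot, Dpow, Dpow, Dpow, Dpow, trace_diag_mul_rot_conj_mul_diag_mul_rot_conj,
    div_pow, div_pow, Real.sq_sqrt (qn_three_pos hq).le]
  field_simp

theorem Dpow_one_mul_Umat_conj_pow_three (hq : q - q⁻¹ ≠ 0) :
    (Dpow q 1 * (Umat q * Dpow q 1 * (Umat q)ᵀ)) ^ 3 = 1 := by
  have hq0 := ne_zero_of_sub_inv_ne_zero hq
  have h2 := qn_two_ne_zero hq
  have hs := Real.sq_sqrt (qn_three_pos hq).le
  rw [Umat_eq_rot, Dpow]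
  apply pow_three_eq_one_of_trace_eq_neg_one_of_det_eq_one
  · rw [trace_diag_mul_rot_conj, div_pow, div_pow, hs, qn_two hq, qn_three hq]
    field_simp
    ring
  · rw [det_diag_mul_rot_conj, Umat_cos_sq_add_sin_sq hq, one_pow, mul_one]
    field_simp

end Braid

/-- the two 3-strand braid realizations `(2,3,1,4)` and
`(1,−1,1,3,1,1,1,1,1,1)` of the knot `10₁₃₉` have the same `[21]`-sector trace,
namely `−(q⁵ + q⁻⁵)/(q + q⁻¹)`. -/
theorem knot_10_139_two_realizations (q : ℝ) (hq : 1 < q) :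
    (Dpow q 2 * (Umat q * Dpow q 3 * (Umat q)ᵀ) * Dpow q 1 *
        (Umat q * Dpow q 4 * (Umat q)ᵀ)).trace =
      -(q ^ (5 : ℤ) + q ^ (-5 : ℤ)) / (q + q⁻¹) ∧
    (Dpow q 1 * (Umat q * Dpow q (-1) * (Umat q)ᵀ) * Dpow q 1 *
        (Umat q * Dpow q 3 * (Umat q)ᵀ) *
        (Dpow q 1 * (Umat q * Dpow q 1 * (Umat q)ᵀ)) ^ 3).trace =
      -(q ^ (5 : ℤ) + q ^ (-5 : ℤ)) / (q + q⁻¹) := by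
  have hq0 : q ≠ 0 := by positivity
  have hqq : q - q⁻¹ ≠ 0 := by
    have : q⁻¹ < q := (inv_lt_one_of_one_lt₀ hq).trans hq
    linarith
  have hq2 : q + q⁻¹ ≠ 0 := by positivity
  rw [Dpow_one_mul_Umat_conj_pow_three hqq, mul_one,
    trace_Dpow_mul_Umat_conj_mul_Dpow_mul_Umat_conj hqq,
    trace_Dpow_mul_Umat_conj_mul_Dpow_mul_Umat_conj hqq, qn_two hqq, qn_three hqq]
  simp only [_root_.zpow_neg, zpow_ofNat]
  constructor <;> field_simp <;> ring
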